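/- arXiv:2109.00085 — 2 statements merged into one kernel-verified Lean document; each statement's English description precedes it below -/
import Mathlib

section
/- Let Z be a finite-dimensional complex normed space, B its open unit ball, and S ⊆ closure(B) a closed set such that sup{|f(z)| : z ∈ closure B} = sup{|f(z)| : z ∈ S} for all functions f holomorphic on B and continuous on closure(B). Suppose for each extreme point e of closure(B) there exists such a function h with ‖h‖_{closure B} = 1 and sup{|h(z)| : z ∈ closure B \ B(e,ε)} < 1 for all ε > 0. Then S contains all extreme points of closure(B). -/
/-! The norm of the peaking function `h` at an extreme point `e` attains its supremum `1` over
`S`, but stays below `1` away from every ball around `e`; hence `S` meets every such ball, and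
`e ∈ S` because `S` is closed. -/

open Metric Set

lemma setOf_exists_mem_eq_eq_image {X Y : Type*} (g : X → Y) (s : Set X) :
    {r : Y | ∃ z ∈ s, r = g z} = g '' s := by
  ext r
  simp [eq_comm]

lemma Real.bddAbove_of_sSup_eq_one {s : Set ℝ} (hs : sSup s = 1) : BddAbove s := by
  by_contra hbdd
  simp [Real.sSup_of_not_bddAbove hbdd] at hs

lemma mem_closure_of_sSup_image_eq_one {X : Type*} [PseudoMetricSpace X] {g : X → ℝ}
    {K S : Set X} {e : X} (hSK : S ⊆ K) (hK : BddAbove (g '' K)) (hS : sSup (g '' S) = 1)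
    (hpeak : ∀ ε > 0, sSup (g '' (K \ ball e ε)) < 1) : e ∈ closure S := by
  rw [Metric.mem_closure_iff]
  intro ε hε
  by_contra! hfar
  have hS_far : S ⊆ K \ ball e ε := fun z hz =>
    ⟨hSK hz, fun hz_near => (hfar z hz).not_gt (mem_ball'.mp hz_near)⟩
  have hS_ne : S.Nonempty := by
    by_contra! hempty
    simp [hempty] at hS
  have hle : sSup (g '' S) ≤ sSup (g '' (K \ ball e ε)) :=
    csSup_le_csSup (hK.mono (image_mono sdiff_subset)) (hS_ne.image g) (image_mono hS_far)
  linarith [hpeak ε hε]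

theorem stmt_15_general {Z : Type*} [NormedAddCommGroup Z] [NormedSpace ℂ Z]
    (S : Set Z) (hSsub : S ⊆ Metric.closedBall (0 : Z) 1) (hSclosed : IsClosed S)
    (hdet : ∀ f : Z → ℂ, DifferentiableOn ℂ f (Metric.ball (0 : Z) 1) →
      ContinuousOn f (Metric.closedBall (0 : Z) 1) →
      sSup {r : ℝ | ∃ z ∈ Metric.closedBall (0 : Z) 1, r = ‖f z‖} =
        sSup {r : ℝ | ∃ z ∈ S, r = ‖f z‖})
    (hpeak : ∀ e ∈ Set.extremePoints ℝ (Metric.closedBall (0 : Z) 1),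
      ∃ h : Z → ℂ, DifferentiableOn ℂ h (Metric.ball (0 : Z) 1) ∧
        ContinuousOn h (Metric.closedBall (0 : Z) 1) ∧
        sSup {r : ℝ | ∃ z ∈ Metric.closedBall (0 : Z) 1, r = ‖h z‖} = 1 ∧
        ∀ ε > 0, sSup {r : ℝ |
          ∃ z ∈ Metric.closedBall (0 : Z) 1 \ Metric.ball e ε, r = ‖h z‖} < 1) :
    Set.extremePoints ℝ (Metric.closedBall (0 : Z) 1) ⊆ S := by
  intro e he
  obtain ⟨h, hdiff, hcont, hnorm, hfar⟩ := hpeak e he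
  have hnorm_S : sSup {r : ℝ | ∃ z ∈ S, r = ‖h z‖} = 1 := by
    rw [← hdet h hdiff hcont, hnorm]
  simp only [setOf_exists_mem_eq_eq_image] at hnorm hnorm_S hfar
  rw [← hSclosed.closure_eq]
  exact mem_closure_of_sSup_image_eq_one hSsub (Real.bddAbove_of_sSup_eq_one hnorm) hnorm_S hfar

theorem stmt_15 {Z : Type*} [NormedAddCommGroup Z] [NormedSpace ℂ Z]
    [FiniteDimensional ℂ Z]
    (S : Set Z) (hSsub : S ⊆ Metric.closedBall (0 : Z) 1) (hSclosed : IsClosed S)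
    (hdet : ∀ f : Z → ℂ, DifferentiableOn ℂ f (Metric.ball (0 : Z) 1) →
      ContinuousOn f (Metric.closedBall (0 : Z) 1) →
      sSup {r : ℝ | ∃ z ∈ Metric.closedBall (0 : Z) 1, r = ‖f z‖} =
        sSup {r : ℝ | ∃ z ∈ S, r = ‖f z‖})
    (hpeak : ∀ e ∈ Set.extremePoints ℝ (Metric.closedBall (0 : Z) 1),
      ∃ h : Z → ℂ, DifferentiableOn ℂ h (Metric.ball (0 : Z) 1) ∧
        ContinuousOn h (Metric.closedBall (0 : Z) 1) ∧
        sSup {r : ℝ | ∃ z ∈ Metric.closedBall (0 : Z) 1, r = ‖h z‖} = 1 ∧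
        ∀ ε > 0, sSup {r : ℝ |
          ∃ z ∈ Metric.closedBall (0 : Z) 1 \ Metric.ball e ε, r = ‖h z‖} < 1) :
    Set.extremePoints ℝ (Metric.closedBall (0 : Z) 1) ⊆ S :=
  stmt_15_general S hSsub hSclosed hdet hpeak
end

section
/- Let X, Y be complex Banach spaces, D ⊆ X a domain, M > 0, and (f_n) a sequence in the set F_M = {f : D → Y holomorphic, sup_D ‖f‖ ≤ M}. If Y is finite dimensional, then (f_n) has a subnet converging uniformly on compact subsets of D to a holomorphic function f : D → Y with sup_D ‖f‖ ≤ M. -/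
/-!
Restricting a bounded holomorphic map to complex lines through `x` and using the Cauchy estimates
gives, uniformly over `F_M`, the bounds `‖Df(x) v‖ ≤ M ‖v‖ / R` and
`‖f (x + v) - f x - Df(x) v‖ ≤ 2 M ‖v‖² / R²` whenever `closedBall x R ⊆ D` and `‖v‖ ≤ R / 2`.
The first makes `F_M` locally uniformly Lipschitz, hence equicontinuous. Along an ultrafilter
finer than `atTop`, bounded sequences in the finite-dimensional space `Y` converge, so `f_n`
converges pointwise to some `f` and `Df_n(x) v` to a bounded linear map `A v`; the quadratic
remainder bound survives the limit and shows that `A` is the derivative of `f`. Equicontinuity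
upgrades pointwise convergence to uniform convergence on compact sets.
-/

open Metric Filter Topology
open scoped NNReal

section OneVariable

variable {Y : Type*} [NormedAddCommGroup Y] [NormedSpace ℂ Y]

theorem norm_cauchyPowerSeries_le_of_forall_mem_sphere_norm_le {g : ℂ → Y} {c : ℂ} {R M : ℝ}
    (hR : 0 < R) (hM : ∀ z ∈ sphere c R, ‖g z‖ ≤ M) (n : ℕ) :
    ‖cauchyPowerSeries g c R n‖ ≤ M / R ^ n := by
  have hint : ∫ θ in (0)..(2 * Real.pi), ‖g (circleMap c R θ)‖ ≤ M * (2 * Real.pi) := by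
    refine (le_abs_self _).trans ?_
    simpa [abs_of_pos Real.two_pi_pos] using
      intervalIntegral.norm_integral_le_of_norm_le_const (a := 0) (b := 2 * Real.pi)
        fun θ _ => (norm_norm (g (circleMap c R θ))).trans_le
          (hM _ (circleMap_mem_sphere c hR.le θ))
  calc ‖cauchyPowerSeries g c R n‖
      ≤ ((2 * Real.pi)⁻¹ * ∫ θ in (0)..(2 * Real.pi), ‖g (circleMap c R θ)‖) * |R|⁻¹ ^ n :=
        norm_cauchyPowerSeries_le g c R n
    _ ≤ ((2 * Real.pi)⁻¹ * (M * (2 * Real.pi))) * |R|⁻¹ ^ n := by gcongr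
    _ = M / R ^ n := by
        rw [abs_of_pos hR, inv_pow, mul_comm M, inv_mul_cancel_left₀ Real.two_pi_pos.ne',
          div_eq_mul_inv]

variable [CompleteSpace Y]

theorem norm_sub_sub_smul_deriv_le {g : ℂ → Y} {c : ℂ} {R M : ℝ} (hR : 0 < R)
    (hg : DifferentiableOn ℂ g (closedBall c R)) (hM : ∀ z ∈ sphere c R, ‖g z‖ ≤ M)
    {z : ℂ} (hz : ‖z‖ ≤ R / 2) :
    ‖g (c + z) - g c - z • deriv g c‖ ≤ 2 * M / R ^ 2 * ‖z‖ ^ 2 := by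
  have hM₀ : 0 ≤ M := (norm_nonneg _).trans (hM (c + R) (by simp [abs_of_pos hR]))
  lift R to ℝ≥0 using hR.le
  have hp := hg.hasFPowerSeriesOnBall hR
  set p := cauchyPowerSeries g c R
  have hcoeff := norm_cauchyPowerSeries_le_of_forall_mem_sphere_norm_le hR hM
  have hz' : z ∈ eball (0 : ℂ) R := by
    have : ‖z‖₊ < R := by
      rw [← NNReal.coe_lt_coe, coe_nnnorm]; linarith
    rw [mem_eball, edist_zero_right, enorm_eq_nnnorm]; exact_mod_cast this
  have hrem : HasSum (fun n => p (n + 2) fun _ => z) (g (c + z) - g c - z • deriv g c) := by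
    have := (hasSum_nat_add_iff' 2).2 (hp.hasSum hz')
    rw [Finset.sum_range_succ, Finset.sum_range_one, p.apply_eq_pow_smul_coeff,
      p.apply_eq_pow_smul_coeff, show p.coeff 0 = g c from hp.coeff_zero _] at this
    simp only [pow_zero, pow_one, one_smul] at this
    rwa [hp.hasFPowerSeriesAt.deriv, sub_sub]
  have hterm : ∀ n : ℕ, ‖p (n + 2) fun _ => z‖ ≤ M / R ^ 2 * ‖z‖ ^ 2 * (1 / 2) ^ n := by
    intro n
    have hq : ‖z‖ / R ≤ 1 / 2 := by rw [div_le_iff₀ hR]; linarith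
    calc ‖p (n + 2) fun _ => z‖ ≤ ‖p (n + 2)‖ * ∏ _ : Fin (n + 2), ‖z‖ :=
          (p (n + 2)).le_opNorm _
      _ ≤ M / R ^ (n + 2) * ‖z‖ ^ (n + 2) := by
          rw [Finset.prod_const, Finset.card_univ, Fintype.card_fin]
          gcongr
          exact hcoeff (n + 2)
      _ = M / R ^ 2 * ‖z‖ ^ 2 * (‖z‖ / R) ^ n := by rw [div_pow]; field_simp; ring
      _ ≤ M / R ^ 2 * ‖z‖ ^ 2 * (1 / 2) ^ n := by gcongr
  calc ‖g (c + z) - g c - z • deriv g c‖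
      ≤ ∑' n : ℕ, M / R ^ 2 * ‖z‖ ^ 2 * (1 / 2 : ℝ) ^ n :=
        hrem.norm_le_of_bounded
          ((summable_geometric_two.mul_left _).hasSum) hterm
    _ = 2 * M / R ^ 2 * ‖z‖ ^ 2 := by
        rw [tsum_mul_left, tsum_geometric_two]; ring

end OneVariable

section BoundedHolomorphic

variable {X : Type*} [NormedAddCommGroup X] [NormedSpace ℂ X]
  {Y : Type*} [NormedAddCommGroup Y] [NormedSpace ℂ Y]
  {f : X → Y} {D : Set X} {M R : ℝ} {x v : X}

theorem mapsTo_add_smul_closedBall (hv : v ≠ 0) :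
    Set.MapsTo (fun z : ℂ => x + z • v) (closedBall 0 (R / ‖v‖)) (closedBall x R) := by
  intro z hz
  rw [mem_closedBall_zero_iff, le_div_iff₀ (norm_pos_iff.2 hv)] at hz
  rwa [mem_closedBall, dist_self_add_left, norm_smul]

theorem differentiableOn_comp_add_smul (hf : DifferentiableOn ℂ f D)
    (hball : closedBall x R ⊆ D) (hv : v ≠ 0) :
    DifferentiableOn ℂ (fun z : ℂ => f (x + z • v)) (closedBall 0 (R / ‖v‖)) :=
  hf.comp (by fun_prop) ((mapsTo_add_smul_closedBall hv).mono_right hball)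

theorem norm_fderiv_apply_le_of_closedBall_subset (hD : IsOpen D) (hf : DifferentiableOn ℂ f D)
    (hM : ∀ y ∈ D, ‖f y‖ ≤ M) (hR : 0 < R) (hball : closedBall x R ⊆ D) (v : X) :
    ‖fderiv ℂ f x v‖ ≤ M / R * ‖v‖ := by
  rcases eq_or_ne v 0 with rfl | hv
  · simp
  have hρ : 0 < R / ‖v‖ := div_pos hR (norm_pos_iff.2 hv)
  have hx : DifferentiableAt ℂ f x :=
    hf.differentiableAt (hD.mem_nhds (hball (mem_closedBall_self hR.le)))
  calc ‖fderiv ℂ f x v‖ = ‖deriv (fun z : ℂ => f (x + z • v)) 0‖ := by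
        rw [← hx.lineDeriv_eq_fderiv, lineDeriv]
    _ ≤ M / (R / ‖v‖) := Complex.norm_deriv_le_of_forall_mem_sphere_norm_le hρ
        ((differentiableOn_comp_add_smul hf hball hv).mono
          closure_ball_subset_closedBall).diffContOnCl
        fun z hz => hM _ (hball (mapsTo_add_smul_closedBall hv (sphere_subset_closedBall hz)))
    _ = M / R * ‖v‖ := by field_simp

variable [CompleteSpace Y]

theorem norm_sub_sub_fderiv_apply_le_of_closedBall_subset (hD : IsOpen D)
    (hf : DifferentiableOn ℂ f D) (hM : ∀ y ∈ D, ‖f y‖ ≤ M) (hR : 0 < R)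
    (hball : closedBall x R ⊆ D) (hv : ‖v‖ ≤ R / 2) :
    ‖f (x + v) - f x - fderiv ℂ f x v‖ ≤ 2 * M / R ^ 2 * ‖v‖ ^ 2 := by
  rcases eq_or_ne v 0 with rfl | hv₀
  · simp
  have hρ : 0 < R / ‖v‖ := div_pos hR (norm_pos_iff.2 hv₀)
  have hx : DifferentiableAt ℂ f x :=
    hf.differentiableAt (hD.mem_nhds (hball (mem_closedBall_self hR.le)))
  have h1 : ‖(1 : ℂ)‖ ≤ R / ‖v‖ / 2 := by
    rw [norm_one, div_div, le_div_iff₀ (by positivity)]; linarith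
  have := norm_sub_sub_smul_deriv_le hρ (differentiableOn_comp_add_smul hf hball hv₀)
    (fun z hz => hM _ (hball (mapsTo_add_smul_closedBall hv₀ (sphere_subset_closedBall hz)))) h1
  rw [← lineDeriv, hx.lineDeriv_eq_fderiv] at this
  simp only [zero_add, one_smul, zero_smul, add_zero, norm_one] at this
  calc _ ≤ 2 * M / (R / ‖v‖) ^ 2 * 1 ^ 2 := this
    _ = 2 * M / R ^ 2 * ‖v‖ ^ 2 := by field_simp

theorem norm_sub_le_of_closedBall_subset (hD : IsOpen D)
    (hf : DifferentiableOn ℂ f D) (hM : ∀ y ∈ D, ‖f y‖ ≤ M) (hR : 0 < R)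
    (hball : closedBall x R ⊆ D) (hv : ‖v‖ ≤ R / 2) :
    ‖f (x + v) - f x‖ ≤ 2 * M / R * ‖v‖ := by
  have hM₀ : 0 ≤ M := (norm_nonneg _).trans (hM x (hball (mem_closedBall_self hR.le)))
  have hquad : 2 * M / R ^ 2 * ‖v‖ ^ 2 ≤ M / R * ‖v‖ := by
    calc 2 * M / R ^ 2 * ‖v‖ ^ 2 = 2 * M / R ^ 2 * ‖v‖ * ‖v‖ := by ring
      _ ≤ 2 * M / R ^ 2 * (R / 2) * ‖v‖ := by gcongr
      _ = M / R * ‖v‖ := by field_simp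
  calc ‖f (x + v) - f x‖ ≤ ‖f (x + v) - f x - fderiv ℂ f x v‖ + ‖fderiv ℂ f x v‖ :=
        norm_le_norm_sub_add _ _
    _ ≤ M / R * ‖v‖ + M / R * ‖v‖ := add_le_add
        ((norm_sub_sub_fderiv_apply_le_of_closedBall_subset hD hf hM hR hball hv).trans hquad)
        (norm_fderiv_apply_le_of_closedBall_subset hD hf hM hR hball v)
    _ = 2 * M / R * ‖v‖ := by ring

theorem equicontinuousOn_of_differentiableOn_of_norm_le {ι : Type*} {F : ι → X → Y}
    (hD : IsOpen D) (hF : ∀ i, DifferentiableOn ℂ (F i) D) (hM : ∀ i, ∀ y ∈ D, ‖F i y‖ ≤ M) :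
    EquicontinuousOn F D := by
  intro x hx
  obtain ⟨R, hR, hball⟩ := nhds_basis_closedBall.mem_iff.1 (hD.mem_nhds hx)
  refine EquicontinuousAt.equicontinuousWithinAt ?_ D
  refine Metric.equicontinuousAt_of_continuity_modulus (fun y => 2 * M / R * dist y x) ?_ F ?_
  · exact (continuous_const.mul (continuous_id.dist continuous_const)).tendsto' x 0 (by simp)
  · filter_upwards [closedBall_mem_nhds x (half_pos hR)] with y hy i
    rw [mem_closedBall, dist_eq_norm] at hy
    simpa [dist_eq_norm', norm_sub_rev] using
      norm_sub_le_of_closedBall_subset hD (hF i) (hM i) hR hball hy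

end BoundedHolomorphic

theorem hasFDerivAt_of_norm_sub_sub_le_sq {𝕜 E F : Type*} [NontriviallyNormedField 𝕜]
    [NormedAddCommGroup E] [NormedSpace 𝕜 E] [NormedAddCommGroup F] [NormedSpace 𝕜 F]
    {f : E → F} {A : E →L[𝕜] F} {x : E} {C r : ℝ} (hr : 0 < r)
    (h : ∀ v, ‖v‖ ≤ r → ‖f (x + v) - f x - A v‖ ≤ C * ‖v‖ ^ 2) : HasFDerivAt f A x := by
  rw [hasFDerivAt_iff_isLittleO_nhds_zero]
  refine (Asymptotics.IsBigO.of_bound C ?_).trans_isLittleO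
    (Asymptotics.isLittleO_norm_pow_id one_lt_two)
  filter_upwards [closedBall_mem_nhds 0 hr] with v hv
  simpa using h v (mem_closedBall_zero_iff.1 hv)

theorem EquicontinuousOn.tendstoUniformlyOn_of_tendsto {ι X α : Type*} [TopologicalSpace X]
    [UniformSpace α] {F : ι → X → α} {f : X → α} {L : Filter ι} {K : Set X}
    (hF : EquicontinuousOn F K) (hK : IsCompact K)
    (hlim : ∀ x ∈ K, Tendsto (F · x) L (𝓝 (f x))) : TendstoUniformlyOn F f L K := by
  have := isCompact_iff_compactSpace.mp hK
  rw [tendstoUniformlyOn_iff_restrict]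
  exact UniformFun.tendsto_iff_tendstoUniformly.1 <|
    ((equicontinuous_restrict_iff F).2 hF).tendsto_uniformFun_iff_pi L _ |>.2 <|
      tendsto_pi_nhds.2 fun x => hlim x x.2

section UltrafilterLimits

variable {ι : Type*} (U : Ultrafilter ι)

theorem Ultrafilter.exists_tendsto_of_norm_le {Y : Type*} [SeminormedAddCommGroup Y]
    [ProperSpace Y] {u : ι → Y} {C : ℝ} (hu : ∀ i, ‖u i‖ ≤ C) : ∃ y, Tendsto u U (𝓝 y) := by
  obtain ⟨y, -, hy⟩ := (isCompact_closedBall (0 : Y) C).ultrafilter_le_nhds (U.map u)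
    (by simpa using (univ_mem' fun i => mem_closedBall_zero_iff.2 (hu i) :
      u ⁻¹' closedBall 0 C ∈ (U : Filter ι)))
  exact ⟨y, hy⟩

variable {X : Type*} [NormedAddCommGroup X] [NormedSpace ℂ X]
  {Y : Type*} [NormedAddCommGroup Y] [NormedSpace ℂ Y] [ProperSpace Y]

theorem Ultrafilter.exists_continuousLinearMap_tendsto_apply {T : ι → X →L[ℂ] Y} {C : ℝ}
    (hT : ∀ i v, ‖T i v‖ ≤ C * ‖v‖) : ∃ A : X →L[ℂ] Y, ∀ v, Tendsto (T · v) U (𝓝 (A v)) := by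
  choose A hA using fun v => U.exists_tendsto_of_norm_le (hT · v)
  let A' : X →ₗ[ℂ] Y := linearMapOfTendsto A (fun i => (T i : X →ₗ[ℂ] Y)) (tendsto_pi_nhds.2 hA)
  exact ⟨A'.mkContinuous C fun v => le_of_tendsto (hA v).norm (.of_forall (hT · v)), hA⟩

theorem differentiableOn_of_tendsto_ultrafilter {F : ι → X → Y} {f : X → Y} {D : Set X} {M : ℝ}
    (hD : IsOpen D) (hF : ∀ i, DifferentiableOn ℂ (F i) D) (hM : ∀ i, ∀ y ∈ D, ‖F i y‖ ≤ M)
    (hlim : ∀ y ∈ D, Tendsto (F · y) U (𝓝 (f y))) : DifferentiableOn ℂ f D := by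
  intro x hx
  obtain ⟨R, hR, hball⟩ := nhds_basis_closedBall.mem_iff.1 (hD.mem_nhds hx)
  obtain ⟨A, hA⟩ := U.exists_continuousLinearMap_tendsto_apply (T := fun i => fderiv ℂ (F i) x)
    fun i => norm_fderiv_apply_le_of_closedBall_subset hD (hF i) (hM i) hR hball
  refine (hasFDerivAt_of_norm_sub_sub_le_sq (A := A) (C := 2 * M / R ^ 2) (half_pos hR)
    fun v hv => ?_).differentiableAt.differentiableWithinAt
  have hxv : x + v ∈ D := hball <| by
    rw [mem_closedBall, dist_self_add_left]; linarith
  exact le_of_tendsto (((hlim _ hxv).sub (hlim x hx)).sub (hA v)).norm <| .of_forall fun i =>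
    norm_sub_sub_fderiv_apply_le_of_closedBall_subset hD (hF i) (hM i) hR hball hv

end UltrafilterLimits

theorem stmt_16_general {X : Type*} [NormedAddCommGroup X] [NormedSpace ℂ X]
    {Y : Type*} [NormedAddCommGroup Y] [NormedSpace ℂ Y]
    [FiniteDimensional ℂ Y]
    (D : Set X) (hDopen : IsOpen D)
    (M : ℝ) (fn : ℕ → X → Y)
    (hfn : ∀ n, DifferentiableOn ℂ (fn n) D ∧ ∀ x ∈ D, ‖fn n x‖ ≤ M) :
    ∃ (ι : Type) (L : Filter ι), L.NeBot ∧ ∃ φ : ι → ℕ,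
      Filter.Tendsto φ L Filter.atTop ∧ ∃ f : X → Y,
        DifferentiableOn ℂ f D ∧ (∀ x ∈ D, ‖f x‖ ≤ M) ∧
        ∀ K ⊆ D, IsCompact K →
          TendstoUniformlyOn (fun i => fn (φ i)) f L K := by
  let U : Ultrafilter ℕ := .of atTop
  have hdiff n := (hfn n).1
  have hbound n := (hfn n).2
  choose! f hf using fun x (hx : x ∈ D) => U.exists_tendsto_of_norm_le (hbound · x hx)
  refine ⟨ℕ, U, inferInstance, id, tendsto_id'.2 (Ultrafilter.of_le _), f,
    differentiableOn_of_tendsto_ultrafilter U hDopen hdiff hbound hf,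
    fun x hx => le_of_tendsto (hf x hx).norm (.of_forall (hbound · x hx)), fun K hKD hK => ?_⟩
  exact ((equicontinuousOn_of_differentiableOn_of_norm_le hDopen hdiff hbound).mono hKD)
    |>.tendstoUniformlyOn_of_tendsto hK fun x hx => hf x (hKD hx)

theorem stmt_16 {X : Type*} [NormedAddCommGroup X] [NormedSpace ℂ X] [CompleteSpace X]
    {Y : Type*} [NormedAddCommGroup Y] [NormedSpace ℂ Y] [CompleteSpace Y]
    [FiniteDimensional ℂ Y]
    (D : Set X) (hDopen : IsOpen D) (hDconn : IsConnected D)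
    (M : ℝ) (hM : 0 < M) (fn : ℕ → X → Y)
    (hfn : ∀ n, DifferentiableOn ℂ (fn n) D ∧ ∀ x ∈ D, ‖fn n x‖ ≤ M) :
    ∃ (ι : Type) (L : Filter ι), L.NeBot ∧ ∃ φ : ι → ℕ,
      Filter.Tendsto φ L Filter.atTop ∧ ∃ f : X → Y,
        DifferentiableOn ℂ f D ∧ (∀ x ∈ D, ‖f x‖ ≤ M) ∧
        ∀ K ⊆ D, IsCompact K →
          TendstoUniformlyOn (fun i => fn (φ i)) f L K :=
  stmt_16_general D hDopen M fn hfn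
end
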